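/- arXiv:2111.00402 — 6 statements merged into one kernel-verified Lean document; each statement's English description precedes it below -/
import Mathlib

section
/- Assume V : ℝ^d → ℝ is twice continuously differentiable, V(x) = ‖x‖²/2 for all x with ‖x‖₂ > R, and min_x V(x) = 0 is attained. Then for every τ > 0 and every ε ∈ (0, τ) there exists a constant C_{τ,ε,d} > 0 (depending only on τ, ε, d) such that for all σ ∈ (0,1], μ_σ({x ∈ ℝ^d : V(x) > τ}) ≤ C_{τ,ε,d} · exp(-(τ - ε)/σ). -/
open MeasureTheory Real Filter Set

/-- The Gibbs measure `μ_σ` with density `exp(-V x / σ) / C_σ` with respect to Lebesgue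
measure on `ℝ^d`, where `C_σ = ∫ exp(-V y / σ) dy`. -/
noncomputable def gibbsMeasure {d : ℕ} (V : EuclideanSpace ℝ (Fin d) → ℝ) (σ : ℝ) :
    Measure (EuclideanSpace ℝ (Fin d)) :=
  (ENNReal.ofReal (∫ y, Real.exp (-V y / σ)))⁻¹ •
    (volume.withDensity fun x => ENNReal.ofReal (Real.exp (-V x / σ)))

lemma integrable_gauss_half {d : ℕ} :
    Integrable (fun x : EuclideanSpace ℝ (Fin d) => Real.exp (-(1/2) * ‖x‖ ^ 2)) := by
  have h := (GaussianFourier.integrable_cexp_neg_mul_sq_norm_add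
    (V := EuclideanSpace ℝ (Fin d)) (b := (1/2 : ℂ)) (by norm_num) 0 0).norm
  have heq : ∀ x : EuclideanSpace ℝ (Fin d),
      ‖Complex.exp (-(1/2 : ℂ) * (‖x‖ : ℂ) ^ 2 + 0 * (inner ℝ (0 : EuclideanSpace ℝ (Fin d)) x : ℝ))‖
        = Real.exp (-(1/2) * ‖x‖ ^ 2) := by
    intro x
    rw [Complex.norm_exp]
    norm_num [← Complex.ofReal_pow]
  refine h.congr (Filter.Eventually.of_forall fun x => ?_)
  exact heq x

/-- Under Assumption (A) (`V` is `C²`, equals `‖x‖²/2` outside the ball of radius `R`,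
and has minimum value `0`), for every `τ > 0` and `ε ∈ (0, τ)` there is a constant
`C > 0` such that `μ_σ({V > τ}) ≤ C exp(-(τ-ε)/σ)` for all `σ ∈ (0,1]`. -/
theorem stmt2 {d : ℕ} (R : ℝ) (V : EuclideanSpace ℝ (Fin d) → ℝ)
    (hV : ContDiff ℝ 2 V)
    (hout : ∀ x : EuclideanSpace ℝ (Fin d), R < ‖x‖ → V x = ‖x‖ ^ 2 / 2)
    (hnonneg : ∀ x, 0 ≤ V x) (hmin : ∃ x, V x = 0)
    (τ ε : ℝ) (hτ : 0 < τ) (hε : 0 < ε) (hετ : ε < τ) :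
    ∃ C : ℝ, 0 < C ∧ ∀ σ ∈ Set.Ioc (0:ℝ) 1,
      (gibbsMeasure V σ {x | τ < V x}).toReal ≤ C * Real.exp (-(τ - ε) / σ) := by
  obtain ⟨x₀, hx₀⟩ := hmin
  have hcont : Continuous V := hV.continuous
  -- a small ball around the minimizer where V < ε
  have hev : ∀ᶠ x in nhds x₀, V x < ε := by
    have : ContinuousAt V x₀ := hcont.continuousAt
    have h0 : V x₀ < ε := by rw [hx₀]; exact hε
    exact this.eventually_lt continuousAt_const h0
  obtain ⟨r, hr, hball⟩ := Metric.eventually_nhds_iff_ball.mp hev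
  set B := Metric.ball x₀ r with hB
  have hBmeas : MeasurableSet B := measurableSet_ball
  have hvpos : 0 < (volume B).toReal :=
    ENNReal.toReal_pos (Metric.measure_ball_pos _ _ hr).ne' measure_ball_lt_top.ne
  set v := (volume B).toReal with hv
  set R' := max R 0 with hR'
  -- pointwise domination by a Gaussian
  have hdom : ∀ x : EuclideanSpace ℝ (Fin d),
      Real.exp (-V x) ≤ Real.exp (R' ^ 2 / 2) * Real.exp (-(1/2) * ‖x‖ ^ 2) := by
    intro x
    rw [← Real.exp_add]
    apply Real.exp_le_exp.mpr
    rcases le_or_gt ‖x‖ R' with h | h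
    · have h0 : 0 ≤ V x := hnonneg x
      have h1 : 0 ≤ ‖x‖ := norm_nonneg x
      nlinarith
    · have hRx : R < ‖x‖ := lt_of_le_of_lt (le_max_left R 0) h
      rw [hout x hRx]
      nlinarith [sq_nonneg R']
  -- integrability of the density for each σ ∈ (0,1]
  have hint : ∀ s : ℝ, 0 < s → s ≤ 1 → Integrable (fun x => Real.exp (-V x / s)) := by
    intro s hs hs1
    have hcont' : Continuous fun x => Real.exp (-V x / s) :=
      ((hcont.neg).div_const s).rexp
    refine (integrable_gauss_half.const_mul (Real.exp (R' ^ 2 / 2))).mono'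
      hcont'.aestronglyMeasurable ?_
    filter_upwards with x
    rw [Real.norm_eq_abs, abs_of_nonneg (Real.exp_nonneg _)]
    calc Real.exp (-V x / s) ≤ Real.exp (-V x) := by
          apply Real.exp_le_exp.mpr
          have h0 : 0 ≤ V x := hnonneg x
          rw [div_le_iff₀ hs]
          nlinarith
      _ ≤ _ := hdom x
  have hI₁int : Integrable (fun x => Real.exp (-V x)) := by
    simpa using hint 1 one_pos le_rfl
  set I₁ := ∫ x, Real.exp (-V x) with hI₁
  have hI₁nonneg : 0 ≤ I₁ :=
    integral_nonneg fun x => (Real.exp_nonneg _)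
  refine ⟨Real.exp τ * (I₁ + 1) / v, by positivity, ?_⟩
  rintro σ ⟨hσ0, hσ1⟩
  set S := {x | τ < V x} with hS
  have hSmeas : MeasurableSet S := measurableSet_lt measurable_const hcont.measurable
  set Cσ := ∫ y, Real.exp (-V y / σ) with hCσ
  set N := ∫ x in S, Real.exp (-V x / σ) with hNdef
  have hNnonneg : 0 ≤ N := integral_nonneg fun x => Real.exp_nonneg _
  -- lower bound on the normalization
  have hCσ_lb : v * Real.exp (-ε / σ) ≤ Cσ := by
    calc v * Real.exp (-ε / σ) = ∫ _ in B, Real.exp (-ε / σ) := by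
          rw [setIntegral_const, smul_eq_mul]; rfl
      _ ≤ ∫ x in B, Real.exp (-V x / σ) := by
          refine setIntegral_mono_on (integrableOn_const measure_ball_lt_top.ne)
            (hint σ hσ0 hσ1).integrableOn hBmeas fun x hx => ?_
          apply Real.exp_le_exp.mpr
          have hVx : V x < ε := hball x (by simpa [Metric.mem_ball] using hx)
          gcongr
      _ ≤ Cσ := setIntegral_le_integral (hint σ hσ0 hσ1)
            (Filter.Eventually.of_forall fun x => Real.exp_nonneg _)
  have hCσpos : 0 < Cσ := lt_of_lt_of_le (by positivity) hCσ_lb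
  -- upper bound on the numerator
  have hN : N ≤ Real.exp τ * Real.exp (-τ / σ) * I₁ := by
    have h1 : 1 ≤ σ⁻¹ := one_le_inv_iff₀.mpr ⟨hσ0, hσ1⟩
    calc N ≤ ∫ x in S, Real.exp (τ - τ / σ) * Real.exp (-V x) := by
          refine setIntegral_mono_on (hint σ hσ0 hσ1).integrableOn
            (hI₁int.const_mul _).integrableOn hSmeas fun x hx => ?_
          rw [← Real.exp_add]
          apply Real.exp_le_exp.mpr
          have hx' : τ ≤ V x := le_of_lt hx
          rw [div_eq_mul_inv, div_eq_mul_inv]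
          nlinarith [mul_nonneg (sub_nonneg.mpr hx') (sub_nonneg.mpr h1)]
      _ ≤ ∫ x, Real.exp (τ - τ / σ) * Real.exp (-V x) :=
          setIntegral_le_integral (hI₁int.const_mul _)
            (Filter.Eventually.of_forall fun x => by positivity)
      _ = Real.exp τ * Real.exp (-τ / σ) * I₁ := by
          rw [integral_const_mul, ← Real.exp_add, ← hI₁, sub_eq_add_neg, neg_div]
  -- compute the measure
  have hμ : (gibbsMeasure V σ S).toReal = N / Cσ := by
    rw [gibbsMeasure, Measure.smul_apply, smul_eq_mul, ENNReal.toReal_mul,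
      withDensity_apply _ hSmeas,
      ← ofReal_integral_eq_lintegral_ofReal (hint σ hσ0 hσ1).integrableOn
        (Filter.Eventually.of_forall fun x => Real.exp_nonneg _),
      ENNReal.toReal_inv, ENNReal.toReal_ofReal hCσpos.le,
      ENNReal.toReal_ofReal hNnonneg]
    rw [inv_mul_eq_div]
  rw [hμ]
  have hexp : Real.exp (-τ / σ) / Real.exp (-ε / σ) = Real.exp (-(τ - ε) / σ) := by
    rw [← Real.exp_sub]
    congr 1
    ring
  calc N / Cσ ≤ (Real.exp τ * Real.exp (-τ / σ) * I₁) / (v * Real.exp (-ε / σ)) :=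
        div_le_div₀ (by positivity) hN (by positivity) hCσ_lb
    _ = (Real.exp τ * I₁ / v) * (Real.exp (-τ / σ) / Real.exp (-ε / σ)) := by
        field_simp
    _ = (Real.exp τ * I₁ / v) * Real.exp (-(τ - ε) / σ) := by rw [hexp]
    _ ≤ Real.exp τ * (I₁ + 1) / v * Real.exp (-(τ - ε) / σ) := by
        gcongr
        linarith
end

section
/- Let V : ℝ^d → ℝ be continuous with ∫_{ℝ^d} exp(-V(x)) dx < ∞, and suppose the set of global minimizers of V is exactly {x_1^*, …, x_κ^*}, each with V(x_i^*) = min_x V(x). Fix δ' > 0 such that a(δ') := inf{V(x) : ‖x - x_i^*‖₂ ≥ δ' for all i = 1,…,κ} > min_x V(x). Then lim_{σ→0⁺} (2πσ)^{-d/2} · exp(min_x V(x)/σ) · ∫_{⋂_{i=1}^κ {‖x - x_i^*‖₂ ≥ δ'}} exp(-V(x)/σ) dx = 0. -/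
open MeasureTheory Real Filter Set Topology

/-!
On the region where `V ≥ c` with `c > Vmin`, and for `σ ≤ 1`, one has
`exp(-V/σ) ≤ exp(-c (σ⁻¹ - 1)) · exp(-V)`, so the integral is at most
`exp(-c (σ⁻¹ - 1)) ∫ exp(-V)`. After multiplication by `exp(Vmin/σ)` this leaves a factor
`exp(-(c - Vmin)/σ)`, which beats the polynomial growth of `(2πσ)^(-d/2)` as `σ → 0⁺`.
-/

theorem tendsto_mul_rpow_mul_exp_neg_div_nhdsGT_zero {a b : ℝ} (r : ℝ) (hb : 0 ≤ b)
    (ha : 0 < a) :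
    Tendsto (fun σ : ℝ => (b * σ) ^ r * exp (-a / σ)) (𝓝[>] 0) (𝓝 0) := by
  have hinv : Tendsto (fun σ : ℝ => σ⁻¹ ^ (-r) * exp (-a * σ⁻¹)) (𝓝[>] 0) (𝓝 0) :=
    (tendsto_rpow_mul_exp_neg_mul_atTop_nhds_zero (-r) a ha).comp tendsto_inv_nhdsGT_zero
  have hrw : ∀ σ ∈ Ioi (0 : ℝ),
      b ^ r * (σ⁻¹ ^ (-r) * exp (-a * σ⁻¹)) = (b * σ) ^ r * exp (-a / σ) := by
    intro σ hσ
    rw [inv_rpow (le_of_lt hσ), rpow_neg (le_of_lt hσ), inv_inv, mul_rpow hb (le_of_lt hσ),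
      div_eq_mul_inv]
    ring
  simpa using (hinv.const_mul (b ^ r)).congr' (eventually_nhdsWithin_of_forall hrw)

theorem exp_neg_div_le {c y σ : ℝ} (hcy : c ≤ y) (hσ : 0 < σ) (hσ1 : σ ≤ 1) :
    exp (-y / σ) ≤ exp (-c * (σ⁻¹ - 1)) * exp (-y) := by
  rw [← exp_add, exp_le_exp, div_eq_mul_inv]
  have : 0 ≤ σ⁻¹ - 1 := sub_nonneg.2 ((one_le_inv₀ hσ).2 hσ1)
  nlinarith

theorem setIntegral_exp_neg_div_le {α : Type*} [MeasurableSpace α] {μ : Measure α}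
    {f : α → ℝ} {S : Set α} {c σ : ℝ} (hf : AEMeasurable f μ)
    (hint : Integrable (fun x => exp (-f x)) μ) (hS : MeasurableSet S)
    (hc : ∀ x ∈ S, c ≤ f x) (hσ : 0 < σ) (hσ1 : σ ≤ 1) :
    ∫ x in S, exp (-f x / σ) ∂μ ≤ exp (-c * (σ⁻¹ - 1)) * ∫ x, exp (-f x) ∂μ := by
  have hpt : ∀ x ∈ S, exp (-f x / σ) ≤ exp (-c * (σ⁻¹ - 1)) * exp (-f x) :=
    fun x hx => exp_neg_div_le (hc x hx) hσ hσ1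
  have hdom : IntegrableOn (fun x => exp (-c * (σ⁻¹ - 1)) * exp (-f x)) S μ :=
    (hint.const_mul _).integrableOn
  have hint_S : IntegrableOn (fun x => exp (-f x / σ)) S μ := by
    refine hdom.mono' (hf.neg.div_const σ).exp.aestronglyMeasurable.restrict ?_
    rw [ae_restrict_iff' hS]
    exact Eventually.of_forall fun x hx => by
      rw [norm_of_nonneg (exp_pos _).le]; exact hpt x hx
  calc ∫ x in S, exp (-f x / σ) ∂μ
      ≤ ∫ x in S, exp (-c * (σ⁻¹ - 1)) * exp (-f x) ∂μ :=
        setIntegral_mono_on hint_S hdom hS hpt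
    _ = exp (-c * (σ⁻¹ - 1)) * ∫ x in S, exp (-f x) ∂μ := integral_const_mul _ _
    _ ≤ exp (-c * (σ⁻¹ - 1)) * ∫ x, exp (-f x) ∂μ :=
      mul_le_mul_of_nonneg_left
        (setIntegral_le_integral hint (Eventually.of_forall fun x => (exp_pos _).le))
        (exp_pos _).le

theorem stmt5_general {d : ℕ} (V : EuclideanSpace ℝ (Fin d) → ℝ)
    (hV : Continuous V)
    (hint : Integrable (fun x => Real.exp (-V x)))
    (κ : ℕ) (xs : Fin κ → EuclideanSpace ℝ (Fin d))
    (Vmin : ℝ)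
    (δ' : ℝ)
    (ha : ∃ c, Vmin < c ∧
      ∀ x : EuclideanSpace ℝ (Fin d), (∀ i, δ' ≤ dist x (xs i)) → c ≤ V x) :
    Tendsto (fun σ : ℝ =>
        (2 * π * σ) ^ (-(d : ℝ) / 2) * Real.exp (Vmin / σ) *
          ∫ x in {x : EuclideanSpace ℝ (Fin d) | ∀ i, δ' ≤ dist x (xs i)},
            Real.exp (-V x / σ))
      (nhdsWithin 0 (Set.Ioi 0)) (nhds 0) := by
  obtain ⟨c, hc, hcS⟩ := ha
  set I := ∫ x, exp (-V x)
  have hS : IsClosed {x : EuclideanSpace ℝ (Fin d) | ∀ i, δ' ≤ dist x (xs i)} := by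
    simp only [ofPred_forall]
    exact isClosed_iInter fun i =>
      isClosed_le continuous_const (continuous_id.dist continuous_const)
  have hlim := (tendsto_mul_rpow_mul_exp_neg_div_nhdsGT_zero (-(d : ℝ) / 2) two_pi_pos.le
    (sub_pos.2 hc)).mul_const (exp c * I)
  refine squeeze_zero' ?_ ?_ (by simpa only [zero_mul] using hlim)
  · filter_upwards [self_mem_nhdsWithin] with σ (hσ : 0 < σ)
    positivity
  · filter_upwards [Ioo_mem_nhdsGT (zero_lt_one' ℝ)] with σ ⟨hσ, hσ1⟩
    have hexp : exp (Vmin / σ) * exp (-c * (σ⁻¹ - 1)) = exp (-(c - Vmin) / σ) * exp c := by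
      rw [← exp_add, ← exp_add]
      congr 1
      field_simp
      ring
    calc _ ≤ (2 * π * σ) ^ (-(d : ℝ) / 2) * exp (Vmin / σ) *
          (exp (-c * (σ⁻¹ - 1)) * I) := by
          gcongr
          exact setIntegral_exp_neg_div_le hV.aemeasurable hint hS.measurableSet hcS hσ hσ1.le
      _ = _ := by linear_combination (2 * π * σ) ^ (-(d : ℝ) / 2) * I * hexp

/-- Away from the global minimizers, the Laplace-normalized integral of `exp(-V/σ)` over the
set of points at distance at least `δ'` from every minimizer tends to `0` as `σ → 0⁺`. -/
theorem stmt5 {d : ℕ} (V : EuclideanSpace ℝ (Fin d) → ℝ)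
    (hV : Continuous V)
    (hint : Integrable (fun x => Real.exp (-V x)))
    (κ : ℕ) (xs : Fin κ → EuclideanSpace ℝ (Fin d))
    (Vmin : ℝ) (hlb : ∀ y, Vmin ≤ V y)
    (hset : {x | V x = Vmin} = Set.range xs)
    (δ' : ℝ) (hδ' : 0 < δ')
    (ha : ∃ c, Vmin < c ∧
      ∀ x : EuclideanSpace ℝ (Fin d), (∀ i, δ' ≤ dist x (xs i)) → c ≤ V x) :
    Tendsto (fun σ : ℝ =>
        (2 * π * σ) ^ (-(d : ℝ) / 2) * Real.exp (Vmin / σ) *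
          ∫ x in {x : EuclideanSpace ℝ (Fin d) | ∀ i, δ' ≤ dist x (xs i)},
            Real.exp (-V x / σ))
      (nhdsWithin 0 (Set.Ioi 0)) (nhds 0) :=
  stmt5_general V hV hint κ xs Vmin δ' ha
end

section
/- Let V : ℝ^d → ℝ be continuous, attain its minimum min_x V(x), and satisfy ∫_{ℝ^d} exp(-V(x)) dx < ∞. Then lim_{σ→0⁺} ( -σ · log ∫_{ℝ^d} exp(-V(x)/σ) dx ) = min_x V(x). -/
open MeasureTheory Real Filter Set

/-- If `V` is continuous, attains its minimum, and `exp(-V)` is integrable, then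
`-σ log ∫ exp(-V/σ) → min V` as `σ → 0⁺`. -/
theorem stmt6 {d : ℕ} (V : EuclideanSpace ℝ (Fin d) → ℝ)
    (hV : Continuous V)
    (x₀ : EuclideanSpace ℝ (Fin d)) (hx₀ : ∀ y, V x₀ ≤ V y)
    (hint : Integrable (fun x => Real.exp (-V x))) :
    Tendsto (fun σ : ℝ => -σ * Real.log (∫ x, Real.exp (-V x / σ)))
      (nhdsWithin 0 (Set.Ioi 0)) (nhds (V x₀)) := by
  set m := V x₀ with hm
  set W : EuclideanSpace ℝ (Fin d) → ℝ := fun x => V x - m with hWdef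
  have hW0 : ∀ x, 0 ≤ W x := fun x => sub_nonneg.2 (hx₀ x)
  have hWc : Continuous W := hV.sub continuous_const
  have hmem : Ioc (0:ℝ) 1 ∈ nhdsWithin (0:ℝ) (Set.Ioi 0) :=
    Ioc_mem_nhdsGT_of_mem (by constructor <;> norm_num)
  have tlin : ∀ k : ℝ, Tendsto (fun σ : ℝ => σ * k)
      (nhdsWithin 0 (Set.Ioi 0)) (nhds 0) := by
    intro k
    have h : Tendsto (fun σ : ℝ => σ * k) (nhds (0:ℝ)) (nhds (0 * k)) :=
      (continuous_id.mul continuous_const).tendsto 0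
    rw [zero_mul] at h
    exact h.mono_left nhdsWithin_le_nhds
  -- pointwise comparison for σ ≤ 1
  have hle : ∀ σ : ℝ, σ ∈ Ioc (0:ℝ) 1 → ∀ x, -W x / σ ≤ -W x := by
    intro σ hσ x
    rw [div_le_iff₀ hσ.1]
    nlinarith [hW0 x, hσ.1, hσ.2]
  -- integrability of exp(-W/σ)
  have hWint : ∀ σ : ℝ, σ ∈ Ioc (0:ℝ) 1 →
      Integrable (fun x => Real.exp (-W x / σ)) := by
    intro σ hσ
    refine (hint.const_mul (Real.exp m)).mono'
      ((hWc.neg.div_const σ).rexp.aestronglyMeasurable) (ae_of_all _ fun x => ?_)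
    rw [Real.norm_eq_abs, abs_of_pos (Real.exp_pos _), ← Real.exp_add]
    apply Real.exp_le_exp.2
    have h1 := hle σ hσ x
    simp only [hWdef] at h1 ⊢
    linarith
  -- positivity of the integral
  have hpos : ∀ σ : ℝ, σ ∈ Ioc (0:ℝ) 1 → 0 < ∫ x, Real.exp (-W x / σ) := by
    intro σ hσ
    rw [integral_pos_iff_support_of_nonneg (fun x => (Real.exp_pos _).le) (hWint σ hσ)]
    have hs : Function.support (fun x => Real.exp (-W x / σ)) = univ := by
      ext x; simp [Function.support, Real.exp_ne_zero]
    rw [hs]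
    exact isOpen_univ.measure_pos volume univ_nonempty
  -- the key : σ * log (∫ exp(-W/σ)) → 0
  have hkey : Tendsto (fun σ : ℝ => σ * Real.log (∫ x, Real.exp (-W x / σ)))
      (nhdsWithin 0 (Set.Ioi 0)) (nhds 0) := by
    rw [tendsto_order]
    constructor
    · -- lower bound
      intro a ha
      set ε : ℝ := -a / 2 with hε
      have hεpos : 0 < ε := by rw [hε]; linarith
      -- small ball where W ≤ ε
      obtain ⟨r, hr, hball⟩ := Metric.continuousAt_iff.1 hWc.continuousAt ε hεpos
      have hWx₀ : W x₀ = 0 := sub_self m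
      set c : ℝ := (volume (Metric.ball x₀ r)).toReal with hc
      have hcpos : 0 < c := ENNReal.toReal_pos
        (Metric.measure_ball_pos volume x₀ hr).ne' (measure_ball_lt_top).ne
      have hlower : ∀ σ : ℝ, σ ∈ Ioc (0:ℝ) 1 →
          c * Real.exp (-ε / σ) ≤ ∫ x, Real.exp (-W x / σ) := by
        intro σ hσ
        have h1 : ∫ x in Metric.ball x₀ r, Real.exp (-W x / σ)
            ≤ ∫ x, Real.exp (-W x / σ) :=
          setIntegral_le_integral (hWint σ hσ) (ae_of_all _ fun x => (Real.exp_pos _).le)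
        have hconst : ∫ _ in Metric.ball x₀ r, Real.exp (-ε / σ)
            = c * Real.exp (-ε / σ) := by
          rw [setIntegral_const, smul_eq_mul]; rfl
        have h2 : c * Real.exp (-ε / σ)
            ≤ ∫ x in Metric.ball x₀ r, Real.exp (-W x / σ) := by
          rw [← hconst]
          apply setIntegral_mono_on
          · exact integrableOn_const measure_ball_lt_top.ne
          · exact (hWint σ hσ).integrableOn
          · exact measurableSet_ball
          · intro x hx
            apply Real.exp_le_exp.2
            have hWx : W x < ε := by
              have := hball (Metric.mem_ball.1 hx)
              rw [Real.dist_eq, hWx₀, sub_zero] at this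
              exact (abs_lt.1 this).2
            have hwe : -ε ≤ -W x := by linarith
            exact div_le_div_of_nonneg_right hwe hσ.1.le
        linarith
      have hev : ∀ᶠ σ in nhdsWithin (0:ℝ) (Set.Ioi 0), a + ε < σ * Real.log c :=
        (tlin (Real.log c)).eventually (eventually_gt_nhds (by rw [hε]; linarith))
      filter_upwards [hmem, hev] with σ hσ h2
      have hl := hlower σ hσ
      have hlog : Real.log c + (-ε / σ) ≤ Real.log (∫ x, Real.exp (-W x / σ)) := by
        rw [← Real.log_exp (-ε / σ), ← Real.log_mul hcpos.ne' (Real.exp_ne_zero _)]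
        exact Real.log_le_log (by positivity) hl
      have h3 : σ * (Real.log c + (-ε / σ)) ≤ σ * Real.log (∫ x, Real.exp (-W x / σ)) :=
        mul_le_mul_of_nonneg_left hlog hσ.1.le
      have hεσ : σ * (-ε / σ) = -ε := by rw [mul_comm, div_mul_cancel₀ _ hσ.1.ne']
      nlinarith [h3, hεσ]
    · -- upper bound
      intro b hb
      have h11 : (1:ℝ) ∈ Ioc (0:ℝ) 1 := ⟨one_pos, le_refl 1⟩
      have hC1 : Integrable (fun x => Real.exp (-W x)) := by
        have := hWint 1 h11; simpa using this
      have hCpos : 0 < ∫ x, Real.exp (-W x) := by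
        have := hpos 1 h11; simpa using this
      have hev : ∀ᶠ σ in nhdsWithin (0:ℝ) (Set.Ioi 0),
          σ * Real.log (∫ x, Real.exp (-W x)) < b :=
        (tlin (Real.log (∫ x, Real.exp (-W x)))).eventually (eventually_lt_nhds hb)
      filter_upwards [hmem, hev] with σ hσ h2
      have hIC : ∫ x, Real.exp (-W x / σ) ≤ ∫ x, Real.exp (-W x) :=
        integral_mono (hWint σ hσ) hC1 (fun x => Real.exp_le_exp.2 (hle σ hσ x))
      have h3 := mul_le_mul_of_nonneg_left (Real.log_le_log (hpos σ hσ) hIC) hσ.1.le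
      linarith
  -- assemble
  have hfin : Tendsto (fun σ : ℝ => m - σ * Real.log (∫ x, Real.exp (-W x / σ)))
      (nhdsWithin 0 (Set.Ioi 0)) (nhds (m - 0)) := tendsto_const_nhds.sub hkey
  rw [sub_zero] at hfin
  refine Tendsto.congr' ?_ hfin
  filter_upwards [hmem] with σ hσ
  have hσ0 : σ ≠ 0 := hσ.1.ne'
  have hfx : (fun x => Real.exp (-V x / σ))
      = fun x => Real.exp (-m / σ) * Real.exp (-W x / σ) := by
    funext x
    rw [← Real.exp_add]
    congr 1
    simp only [hWdef]
    field_simp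
    ring
  rw [hfx, integral_const_mul, Real.log_mul (Real.exp_ne_zero _) (hpos σ hσ).ne',
    Real.log_exp]
  field_simp
  ring
end

section
/- Let V : ℝ^d → ℝ be continuous, attain its minimum min_x V(x), and satisfy ∫_{ℝ^d} exp(-V(x)) dx < ∞. Then for every bounded continuous function F : ℝ^d → ℝ, lim_{σ→0⁺} σ · log ( C_σ^{-1} ∫_{ℝ^d} exp((F(x) - V(x))/σ) dx ) = sup_x { F(x) - (V(x) - min_x V(x)) }, where C_σ = ∫_{ℝ^d} exp(-V(y)/σ) dy. In other words, the family of Gibbs measures {μ_σ} satisfies the Laplace principle with rate function I(x) = V(x) - min_x V(x). -/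
open MeasureTheory Real Filter Set

private lemma exp_div_le' {d : ℕ} {G : EuclideanSpace ℝ (Fin d) → ℝ} {M σ : ℝ}
    (hM : ∀ x, G x ≤ M) (hσ : 0 < σ) (hσ1 : σ ≤ 1) (x : EuclideanSpace ℝ (Fin d)) :
    Real.exp (G x / σ) ≤ Real.exp (M * (1/σ - 1)) * Real.exp (G x) := by
  rw [← Real.exp_add, Real.exp_le_exp]
  have h0 : (1:ℝ) ≤ 1/σ := by rw [le_div_iff₀ hσ]; linarith
  have h1 : G x / σ = G x + G x * (1/σ - 1) := by field_simp; ring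
  have h2 : G x * (1/σ - 1) ≤ M * (1/σ - 1) :=
    mul_le_mul_of_nonneg_right (hM x) (by linarith)
  linarith

private lemma integrable_exp_div' {d : ℕ} {G : EuclideanSpace ℝ (Fin d) → ℝ}
    (hG : Continuous G) {M : ℝ} (hM : ∀ x, G x ≤ M)
    (hint : Integrable (fun x => Real.exp (G x))) {σ : ℝ} (hσ : 0 < σ) (hσ1 : σ ≤ 1) :
    Integrable (fun x => Real.exp (G x / σ)) := by
  apply Integrable.mono' (hint.const_mul (Real.exp (M * (1/σ - 1))))
  · exact ((hG.div_const σ).rexp).aestronglyMeasurable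
  · exact ae_of_all _ fun x => by
      rw [Real.norm_eq_abs, Real.abs_exp]; exact exp_div_le' hM hσ hσ1 x

private lemma integral_exp_div_pos' {d : ℕ} {G : EuclideanSpace ℝ (Fin d) → ℝ}
    (hG : Continuous G) {M : ℝ} (hM : ∀ x, G x ≤ M)
    (hint : Integrable (fun x => Real.exp (G x))) {σ : ℝ} (hσ : 0 < σ) (hσ1 : σ ≤ 1) :
    0 < ∫ x, Real.exp (G x / σ) := by
  have hi := integrable_exp_div' hG hM hint hσ hσ1
  rw [integral_pos_iff_support_of_nonneg (fun x => (Real.exp_pos _).le) hi]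
  have hsupp : Function.support (fun x : EuclideanSpace ℝ (Fin d) => Real.exp (G x / σ))
      = Set.univ := by
    ext x; simp [Function.mem_support, (Real.exp_pos _).ne']
  rw [hsupp]
  exact isOpen_univ.measure_pos volume univ_nonempty

private lemma laplace_key {d : ℕ} (G : EuclideanSpace ℝ (Fin d) → ℝ) (hG : Continuous G)
    (hbdd : BddAbove (Set.range G))
    (hint : Integrable (fun x => Real.exp (G x))) :
    Tendsto (fun σ : ℝ => σ * Real.log (∫ x, Real.exp (G x / σ)))
      (nhdsWithin 0 (Set.Ioi 0)) (nhds (⨆ x, G x)) := by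
  set M := ⨆ x, G x with hMdef
  have hM : ∀ x, G x ≤ M := fun x => le_ciSup hbdd x
  have hIpos : 0 < ∫ x, Real.exp (G x) := by
    have := integral_exp_div_pos' hG hM hint one_pos le_rfl
    simpa using this
  rw [tendsto_order]
  constructor
  · -- lower bound
    intro a ha
    obtain ⟨x, hx⟩ : ∃ x, (M + a)/2 < G x := exists_lt_of_lt_ciSup (by linarith)
    obtain ⟨r, hr, hball⟩ :=
      Metric.isOpen_iff.1 (isOpen_Ioi.preimage hG) x (by simpa using hx)
    set v := (volume (Metric.ball x r)).toReal with hv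
    have hvpos : 0 < v :=
      ENNReal.toReal_pos (Metric.measure_ball_pos volume x hr).ne' measure_ball_lt_top.ne
    have hlow : ∀ᶠ σ in nhdsWithin (0:ℝ) (Set.Ioi 0),
        σ * Real.log v + (M + a)/2 ≤ σ * Real.log (∫ y, Real.exp (G y / σ)) := by
      filter_upwards [Ioo_mem_nhdsGT (by norm_num : (0:ℝ) < 1)] with σ hσ
      obtain ⟨hσ0, hσ1⟩ := hσ
      have hint' := integrable_exp_div' hG hM hint hσ0 hσ1.le
      have h1 : v * Real.exp (((M + a)/2)/σ) ≤ ∫ y, Real.exp (G y / σ) := by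
        have hsub : ∫ y in Metric.ball x r, Real.exp (((M + a)/2)/σ)
            ≤ ∫ y in Metric.ball x r, Real.exp (G y / σ) := by
          apply setIntegral_mono_on
          · exact integrableOn_const measure_ball_lt_top.ne
          · exact hint'.integrableOn
          · exact measurableSet_ball
          · intro y hy
            have : (M + a)/2 < G y := hball hy
            exact Real.exp_le_exp.2 (by gcongr)
        have hconst : ∫ y in Metric.ball x r, Real.exp (((M + a)/2)/σ)
            = v * Real.exp (((M + a)/2)/σ) := by
          rw [setIntegral_const, smul_eq_mul]; rfl
        have hle2 : ∫ y in Metric.ball x r, Real.exp (G y / σ) ≤ ∫ y, Real.exp (G y / σ) :=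
          setIntegral_le_integral hint' (ae_of_all _ fun y => (Real.exp_pos _).le)
        linarith [hconst ▸ hsub]
      have hpos : 0 < ∫ y, Real.exp (G y / σ) :=
        lt_of_lt_of_le (by positivity) h1
      have hlog : Real.log (v * Real.exp (((M + a)/2)/σ))
          ≤ Real.log (∫ y, Real.exp (G y / σ)) :=
        Real.log_le_log (by positivity) h1
      have hcalc : Real.log (v * Real.exp (((M + a)/2)/σ))
          = Real.log v + ((M + a)/2)/σ := by
        rw [Real.log_mul hvpos.ne' (Real.exp_pos _).ne', Real.log_exp]
      have := mul_le_mul_of_nonneg_left hlog hσ0.le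
      rw [hcalc, mul_add, mul_div_cancel₀ _ hσ0.ne'] at this
      linarith
    have htend : Tendsto (fun σ : ℝ => σ * Real.log v + (M + a)/2)
        (nhdsWithin (0:ℝ) (Set.Ioi 0)) (nhds ((M + a)/2)) := by
      have hc : Continuous (fun σ : ℝ => σ * Real.log v + (M + a)/2) := by fun_prop
      have h := hc.tendsto (0:ℝ)
      simp only [zero_mul, zero_add] at h
      exact h.mono_left nhdsWithin_le_nhds
    filter_upwards [hlow, htend.eventually (eventually_gt_nhds (by linarith : a < (M + a)/2))]
      with σ h1 h2
    linarith
  · -- upper bound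
    intro a ha
    set I := ∫ x, Real.exp (G x) with hI
    have hub : ∀ᶠ σ in nhdsWithin (0:ℝ) (Set.Ioi 0),
        σ * Real.log (∫ y, Real.exp (G y / σ)) ≤ M * (1 - σ) + σ * Real.log I := by
      filter_upwards [Ioo_mem_nhdsGT (by norm_num : (0:ℝ) < 1)] with σ hσ
      obtain ⟨hσ0, hσ1⟩ := hσ
      have hint' := integrable_exp_div' hG hM hint hσ0 hσ1.le
      have hpos := integral_exp_div_pos' hG hM hint hσ0 hσ1.le
      have h1 : ∫ y, Real.exp (G y / σ) ≤ Real.exp (M * (1/σ - 1)) * I := by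
        rw [hI, ← integral_const_mul]
        exact integral_mono hint' (hint.const_mul _) (exp_div_le' hM hσ0 hσ1.le)
      have hlog : Real.log (∫ y, Real.exp (G y / σ))
          ≤ M * (1/σ - 1) + Real.log I := by
        calc Real.log (∫ y, Real.exp (G y / σ))
            ≤ Real.log (Real.exp (M * (1/σ - 1)) * I) := Real.log_le_log hpos h1
          _ = M * (1/σ - 1) + Real.log I := by
              rw [Real.log_mul (Real.exp_pos _).ne' hIpos.ne', Real.log_exp]
      have := mul_le_mul_of_nonneg_left hlog hσ0.le
      have hcalc : σ * (M * (1/σ - 1) + Real.log I) = M * (1 - σ) + σ * Real.log I := by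
        field_simp
      linarith [hcalc ▸ this]
    have htend : Tendsto (fun σ : ℝ => M * (1 - σ) + σ * Real.log I)
        (nhdsWithin (0:ℝ) (Set.Ioi 0)) (nhds M) := by
      have hc : Continuous (fun σ : ℝ => M * (1 - σ) + σ * Real.log I) := by fun_prop
      have h := hc.tendsto (0:ℝ)
      simp only [sub_zero, mul_one, zero_mul, add_zero] at h
      exact h.mono_left nhdsWithin_le_nhds
    filter_upwards [hub, htend.eventually (eventually_lt_nhds ha)] with σ h1 h2
    linarith

/-- Laplace principle for the Gibbs measures: for every bounded continuous `F`,
`σ log ( C_σ⁻¹ ∫ exp((F - V)/σ) ) → sup_x { F(x) - (V(x) - min V) }` as `σ → 0⁺`,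
where `C_σ = ∫ exp(-V/σ)`. -/
theorem stmt7 {d : ℕ} (V : EuclideanSpace ℝ (Fin d) → ℝ)
    (hV : Continuous V)
    (x₀ : EuclideanSpace ℝ (Fin d)) (hx₀ : ∀ y, V x₀ ≤ V y)
    (hint : Integrable (fun x => Real.exp (-V x))) :
    ∀ F : BoundedContinuousFunction (EuclideanSpace ℝ (Fin d)) ℝ,
      Tendsto (fun σ : ℝ =>
          σ * Real.log ((∫ y, Real.exp (-V y / σ))⁻¹ *
            ∫ x, Real.exp ((F x - V x) / σ)))
        (nhdsWithin 0 (Set.Ioi 0)) (nhds (⨆ x, F x - (V x - V x₀))) := by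
  intro F
  set G1 : EuclideanSpace ℝ (Fin d) → ℝ := fun x => F x - V x with hG1
  set G2 : EuclideanSpace ℝ (Fin d) → ℝ := fun x => -V x with hG2
  have hFle : ∀ x, F x ≤ ‖F‖ := fun x =>
    le_trans (le_abs_self _) (by rw [← Real.norm_eq_abs]; exact F.norm_coe_le_norm x)
  have hbdd1 : BddAbove (Set.range G1) := by
    refine ⟨‖F‖ - V x₀, ?_⟩
    rintro _ ⟨x, rfl⟩
    have := hFle x; have := hx₀ x
    simp only [hG1]; linarith
  have hbdd2 : BddAbove (Set.range G2) := by
    refine ⟨-V x₀, ?_⟩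
    rintro _ ⟨x, rfl⟩
    exact neg_le_neg (hx₀ x)
  have hG1c : Continuous G1 := F.continuous.sub hV
  have hG2c : Continuous G2 := hV.neg
  have hM1 : ∀ x, G1 x ≤ ‖F‖ - V x₀ := fun x => by
    have := hFle x; have := hx₀ x; simp only [hG1]; linarith
  have hM2 : ∀ x, G2 x ≤ -V x₀ := fun x => neg_le_neg (hx₀ x)
  have hint1 : Integrable (fun x => Real.exp (G1 x)) := by
    apply Integrable.mono' (hint.const_mul (Real.exp ‖F‖))
    · exact hG1c.rexp.aestronglyMeasurable
    · refine ae_of_all _ fun x => ?_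
      rw [Real.norm_eq_abs, Real.abs_exp]
      simp only [hG1]
      rw [sub_eq_add_neg, Real.exp_add]
      gcongr
      exact hFle x
  have hint2 : Integrable (fun x => Real.exp (G2 x)) := hint
  have h1 := laplace_key G1 hG1c hbdd1 hint1
  have h2 := laplace_key G2 hG2c hbdd2 hint2
  have key := h1.sub h2
  have hsup2 : (⨆ x, G2 x) = -V x₀ :=
    le_antisymm (ciSup_le fun x => neg_le_neg (hx₀ x)) (le_ciSup hbdd2 x₀)
  have hsup : (⨆ x, F x - (V x - V x₀)) = (⨆ x, G1 x) - (⨆ x, G2 x) := by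
    rw [hsup2, sub_neg_eq_add]
    have heq : (fun x : EuclideanSpace ℝ (Fin d) => F x - (V x - V x₀))
        = fun x => G1 x + V x₀ := funext fun x => by simp only [hG1]; ring
    rw [heq]
    apply le_antisymm
    · exact ciSup_le fun x => add_le_add_left (le_ciSup hbdd1 x) _
    · have hbdd1' : BddAbove (Set.range fun x => G1 x + V x₀) := by
        obtain ⟨b, hb⟩ := hbdd1
        exact ⟨b + V x₀, by rintro _ ⟨x, rfl⟩; exact add_le_add_left (hb ⟨x, rfl⟩) _⟩
      rw [← le_sub_iff_add_le]
      exact ciSup_le fun x => le_sub_iff_add_le.2 (le_ciSup hbdd1' x)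
  rw [hsup]
  apply key.congr'
  filter_upwards [Ioo_mem_nhdsGT (by norm_num : (0:ℝ) < 1)] with σ hσ
  obtain ⟨hσ0, hσ1⟩ := hσ
  have hA : 0 < ∫ y, Real.exp (-V y / σ) :=
    integral_exp_div_pos' hG2c hM2 hint2 hσ0 hσ1.le
  have hB : 0 < ∫ x, Real.exp ((F x - V x) / σ) :=
    integral_exp_div_pos' hG1c hM1 hint1 hσ0 hσ1.le
  rw [Real.log_mul (inv_ne_zero hA.ne') hB.ne', Real.log_inv]
  ring
end

section
/- Let σ, s ∈ (0,1], C₂ > 0, and let b : ℝ^d × [0,1] → ℝ^d satisfy ‖b(x,t) - b(y,u)‖₂ ≤ C₂(‖x - y‖₂ + |t - u|^{1/2}) for all x, y ∈ ℝ^d and t, u ∈ [0,1]. Let t' ∈ [0, 1 - s], let X : [t', t' + s] → ℝ^d be such that u ↦ b(X(u), u) is integrable, let β, w, ỹ' ∈ ℝ^d, set ỹ = ỹ' + σ s β + w, and suppose X(t' + s) = X(t') + σ ∫_{t'}^{t'+s} b(X(u), u) du + w. Then ‖ỹ - X(t'+s)‖₂² ≤ (1 + s + 8C₂²(s + s²))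 · ‖ỹ' - X(t')‖₂² + 8C₂²(1 + s) ∫_{t'}^{t'+s} ‖X(u) - X(t')‖₂² du + 4C₂²(1 + s)s² + 2s(1 + s) · ‖b(ỹ', t') - β‖₂². -/
set_option maxHeartbeats 1000000


open MeasureTheory Real Filter Set

/-- One-step Euler–Maruyama error recursion (synchronous coupling): if `b` is Lipschitz in
space and `1/2`-Hölder in time with constant `C₂`, `ytil = ytil' + σ s β + w` and
`X(t'+s) = X(t') + σ ∫_{t'}^{t'+s} b(X(u), u) du + w`, then
`‖ytil - X(t'+s)‖² ≤ (1 + s + 8C₂²(s + s²)) ‖ytil' - X(t')‖²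
  + 8C₂²(1+s) ∫_{t'}^{t'+s} ‖X(u) - X(t')‖² du + 4C₂²(1+s)s² + 2s(1+s) ‖b(ytil',t') - β‖²`. -/
theorem stmt17 {d : ℕ} (σ s C₂ : ℝ) (hσ : σ ∈ Set.Ioc (0:ℝ) 1)
    (hs : s ∈ Set.Ioc (0:ℝ) 1) (hC₂ : 0 < C₂)
    (b : EuclideanSpace ℝ (Fin d) → ℝ → EuclideanSpace ℝ (Fin d))
    (hb : ∀ x y : EuclideanSpace ℝ (Fin d), ∀ t ∈ Set.Icc (0:ℝ) 1, ∀ u ∈ Set.Icc (0:ℝ) 1,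
      ‖b x t - b y u‖ ≤ C₂ * (‖x - y‖ + |t - u| ^ ((1:ℝ)/2)))
    (t' : ℝ) (ht' : t' ∈ Set.Icc (0:ℝ) (1 - s))
    (X : ℝ → EuclideanSpace ℝ (Fin d))
    (hbint : IntegrableOn (fun u => b (X u) u) (Set.Icc t' (t' + s)))
    (hX2int : IntegrableOn (fun u => ‖X u - X t'‖ ^ 2) (Set.Icc t' (t' + s)))
    (β w ytil' ytil : EuclideanSpace ℝ (Fin d))
    (hy : ytil = ytil' + (σ * s) • β + w)
    (hX : X (t' + s) = X t' + σ • (∫ u in Set.Icc t' (t' + s), b (X u) u) + w) :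
    ‖ytil - X (t' + s)‖ ^ 2 ≤
      (1 + s + 8 * C₂ ^ 2 * (s + s ^ 2)) * ‖ytil' - X t'‖ ^ 2 +
        8 * C₂ ^ 2 * (1 + s) * (∫ u in Set.Icc t' (t' + s), ‖X u - X t'‖ ^ 2) +
        4 * C₂ ^ 2 * (1 + s) * s ^ 2 +
        2 * s * (1 + s) * ‖b ytil' t' - β‖ ^ 2 := by
  obtain ⟨hσ0, hσ1⟩ := hσ
  obtain ⟨hs0, hs1⟩ := hs
  obtain ⟨ht0, ht1⟩ := ht'
  set S : Set ℝ := Set.Icc t' (t' + s) with hS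
  have hμS : (volume S).toReal = s := by
    rw [hS, Real.volume_Icc, show t' + s - t' = s by ring, ENNReal.toReal_ofReal hs0.le]
  have hSfin : volume S < ⊤ := by
    rw [hS, Real.volume_Icc]; exact ENNReal.ofReal_lt_top
  set c : EuclideanSpace ℝ (Fin d) := b ytil' t' with hc
  set I : EuclideanSpace ℝ (Fin d) := ∫ u in S, b (X u) u with hI
  set a : ℝ := ‖ytil' - X t'‖ with ha
  set D : ℝ := ‖c - β‖ with hD
  set N : ℝ := ‖ytil - X (t' + s)‖ with hN0
  set Q : ℝ := ∫ u in S, ‖X u - X t'‖ ^ 2 with hQ0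
  set x : ℝ → ℝ := fun u => ‖X u - X t'‖ with hx
  have hxnn : ∀ u, 0 ≤ x u := fun u => norm_nonneg _
  have hx2 : IntegrableOn (fun u => x u ^ 2) S := hX2int
  have hone : IntegrableOn (fun _ : ℝ => (1:ℝ)) S := integrableOn_const hSfin.ne
  have hxm : AEStronglyMeasurable x (volume.restrict S) := by
    have hxe : x = fun u => Real.sqrt (x u ^ 2) := by
      funext u; rw [Real.sqrt_sq (hxnn u)]
    rw [hxe]
    exact Real.continuous_sqrt.comp_aestronglyMeasurable hx2.aestronglyMeasurable
  have hxint : IntegrableOn x S := by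
    have h1 : IntegrableOn (fun u => x u ^ 2 + 1) S := hx2.add hone
    have h2 : IntegrableOn (fun u => (x u ^ 2 + 1) / 2) S := h1.div_const 2
    refine h2.mono' hxm ?_
    filter_upwards with u
    rw [Real.norm_of_nonneg (hxnn u)]
    nlinarith [sq_nonneg (x u - 1)]
  set g : ℝ → ℝ := fun u => C₂ * (x u + (a + Real.sqrt s)) with hg
  have hgnn : ∀ u, 0 ≤ g u := by
    intro u
    have := hxnn u
    have := Real.sqrt_nonneg s
    have hann' : 0 ≤ a := norm_nonneg _
    positivity
  have hcst : ∀ r : ℝ, IntegrableOn (fun _ : ℝ => r) S := by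
    intro r
    have : IntegrableOn (fun u : ℝ => r * 1) S := hone.const_mul r
    simpa using this
  have hgint : IntegrableOn g S := by
    have h1 : IntegrableOn (fun u => x u + (a + Real.sqrt s)) S := hxint.add (hcst _)
    exact h1.const_mul C₂
  have hg2int : IntegrableOn (fun u => g u ^ 2) S := by
    have h1 : IntegrableOn (fun u => (C₂^2) * (x u ^ 2)) S := hx2.const_mul _
    have h2 : IntegrableOn (fun u => (2*C₂^2*(a + Real.sqrt s)) * x u) S := hxint.const_mul _
    have h3 : IntegrableOn (fun u =>
        (C₂^2) * (x u ^ 2) + ((2*C₂^2*(a + Real.sqrt s)) * x u + C₂^2*(a + Real.sqrt s)^2)) S :=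
      h1.add (h2.add (hcst _))
    have hge : (fun u => g u ^ 2) = fun u =>
        (C₂^2) * (x u ^ 2) + ((2*C₂^2*(a + Real.sqrt s)) * x u + C₂^2*(a + Real.sqrt s)^2) := by
      funext u; simp only [hg]; ring
    rw [hge]; exact h3
  have hconstint : IntegrableOn (fun _ : ℝ => c) S := by
    refine integrableOn_const hSfin.ne
  have hfint : IntegrableOn (fun u => b (X u) u - c) S := hbint.sub hconstint
  -- pointwise bound
  have hpt : ∀ u ∈ S, ‖b (X u) u - c‖ ≤ g u := by
    intro u hu
    obtain ⟨hu1, hu2⟩ := hu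
    have hu01 : u ∈ Set.Icc (0:ℝ) 1 := ⟨by linarith, by linarith⟩
    have ht01 : t' ∈ Set.Icc (0:ℝ) 1 := ⟨ht0, by linarith⟩
    have h1 := hb (X u) ytil' u hu01 t' ht01
    have h2 : |u - t'| ^ ((1:ℝ)/2) ≤ Real.sqrt s := by
      rw [Real.sqrt_eq_rpow]
      refine Real.rpow_le_rpow (abs_nonneg _) ?_ (by norm_num)
      rw [abs_of_nonneg (by linarith)]; linarith
    have h3 : ‖X u - ytil'‖ ≤ x u + a := by
      calc ‖X u - ytil'‖ = ‖(X u - X t') - (ytil' - X t')‖ := by rw [sub_sub_sub_cancel_right]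
        _ ≤ ‖X u - X t'‖ + ‖ytil' - X t'‖ := norm_sub_le _ _
    calc ‖b (X u) u - c‖ ≤ C₂ * (‖X u - ytil'‖ + |u - t'| ^ ((1:ℝ)/2)) := h1
      _ ≤ C₂ * (x u + (a + Real.sqrt s)) := by
          have := mul_le_mul_of_nonneg_left (add_le_add h3 h2) hC₂.le
          linarith
  have hP : ‖∫ u in S, (b (X u) u - c)‖ ≤ ∫ u in S, g u := by
    refine (norm_integral_le_integral_norm _).trans ?_
    exact setIntegral_mono_on hfint.norm hgint measurableSet_Icc hpt
  have hIc : I - s • c = ∫ u in S, (b (X u) u - c) := by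
    rw [integral_sub hbint hconstint, setIntegral_const, measureReal_def, hμS]
  set K : ℝ := ∫ u in S, g u with hK
  have hKnn : 0 ≤ K := setIntegral_nonneg measurableSet_Icc (fun u _ => hgnn u)
  have hdiff : ytil - X (t' + s) = (ytil' - X t') + σ • ((s • (β - c)) + (s • c - I)) := by
    rw [hy, hX, hI]; module
  have hNle : N ≤ a + (s * D + K) := by
    rw [hN0, hdiff]
    refine (norm_add_le _ _).trans ?_
    have h2 : ‖(s • (β - c)) + (s • c - I)‖ ≤ s * D + K := by
      refine (norm_add_le _ _).trans (add_le_add ?_ ?_)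
      · rw [norm_smul, Real.norm_of_nonneg hs0.le, hD, norm_sub_rev]
      · rw [show s • c - I = -(I - s • c) by abel, norm_neg, hIc]
        exact hP
    have h1 : ‖σ • ((s • (β - c)) + (s • c - I))‖ ≤ s * D + K := by
      rw [norm_smul, Real.norm_of_nonneg hσ0.le]
      nlinarith [norm_nonneg ((s • (β - c)) + (s • c - I))]
    linarith
  set T : ℝ := ∫ u in S, g u ^ 2 with hT
  -- Cauchy-Schwarz
  have hCS : K ^ 2 ≤ s * T := by
    have key : 0 ≤ ∫ u in S, (s * g u - K) ^ 2 :=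
      setIntegral_nonneg measurableSet_Icc (fun u _ => sq_nonneg _)
    have hi1 : IntegrableOn (fun u => s^2 * (g u ^ 2)) S := hg2int.const_mul _
    have hi2 : IntegrableOn (fun u => (2*s*K) * g u) S := hgint.const_mul _
    have hi3 : IntegrableOn (fun u => s^2 * (g u ^ 2) - (2*s*K) * g u) S := hi1.sub hi2
    have expand : ∫ u in S, (s * g u - K) ^ 2 = s^2 * T - (2*s*K)*K + K^2 * s := by
      have h1 : (fun u => (s * g u - K) ^ 2) = fun u =>
          (s^2 * (g u ^ 2) - (2*s*K) * g u) + K^2 := by funext u; ring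
      rw [h1, integral_add hi3 (hcst _), integral_sub hi1 hi2,
          integral_const_mul, integral_const_mul, setIntegral_const, measureReal_def, hμS,
          smul_eq_mul, mul_comm (K^2) s, mul_comm s (K^2)]
    rw [expand] at key
    nlinarith [key]
  have hTb : T ≤ 4*C₂^2*Q + 4*C₂^2*a^2*s + 2*C₂^2*s^2 := by
    have hi1 : IntegrableOn (fun u => 4*C₂^2 * (x u ^ 2)) S := hx2.const_mul _
    have hrhsint : IntegrableOn (fun u => 4*C₂^2 * (x u ^ 2) + (4*C₂^2*a^2 + 2*C₂^2*s)) S :=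
      hi1.add (hcst _)
    have hptw : ∀ u ∈ S, g u ^ 2 ≤ 4*C₂^2 * (x u ^ 2) + (4*C₂^2*a^2 + 2*C₂^2*s) := by
      intro u _
      have hr : Real.sqrt s ^ 2 = s := Real.sq_sqrt hs0.le
      have base : (x u + (a + Real.sqrt s))^2 ≤ 4 * x u ^2 + 4*a^2 + 2*s := by
        nlinarith [sq_nonneg (x u + a - Real.sqrt s), sq_nonneg (x u - a)]
      have hmul := mul_le_mul_of_nonneg_left base (sq_nonneg C₂)
      have hgu : g u ^ 2 = C₂^2 * (x u + (a + Real.sqrt s))^2 := by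
        simp only [hg]; ring
      rw [hgu]; nlinarith [hmul]
    have hmono : T ≤ ∫ u in S, (4*C₂^2 * (x u ^ 2) + (4*C₂^2*a^2 + 2*C₂^2*s)) :=
      setIntegral_mono_on hg2int hrhsint measurableSet_Icc hptw
    have hQx : Q = ∫ u in S, x u ^ 2 := rfl
    have hcomp : ∫ u in S, (4*C₂^2 * (x u ^ 2) + (4*C₂^2*a^2 + 2*C₂^2*s))
        = 4*C₂^2*Q + (4*C₂^2*a^2 + 2*C₂^2*s)*s := by
      rw [integral_add hi1 (hcst _), integral_const_mul, setIntegral_const, measureReal_def, hμS,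
          smul_eq_mul, hQx]
      ring
    rw [hcomp] at hmono
    nlinarith [hmono]
  have hQnn : 0 ≤ Q := setIntegral_nonneg measurableSet_Icc (fun u _ => sq_nonneg _)
  have hNnn : 0 ≤ N := norm_nonneg _
  have hDnn : 0 ≤ D := norm_nonneg _
  have hann : 0 ≤ a := norm_nonneg _
  have hNsq : N^2 ≤ (a + (s*D + K))^2 := by nlinarith [hNle]
  have main : s * N^2 ≤ s * ((1 + s + 8 * C₂ ^ 2 * (s + s ^ 2)) * a ^ 2 +
        8 * C₂ ^ 2 * (1 + s) * Q + 4 * C₂ ^ 2 * (1 + s) * s ^ 2 +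
        2 * s * (1 + s) * D ^ 2) := by
    nlinarith [mul_le_mul_of_nonneg_left hNsq hs0.le,
      sq_nonneg (s*a - (s*D + K)),
      mul_nonneg (by linarith : (0:ℝ) ≤ 1 + s) (sq_nonneg (s*D - K)),
      mul_le_mul_of_nonneg_left hCS (by linarith : (0:ℝ) ≤ 2*(1+s)),
      mul_le_mul_of_nonneg_left hTb (by positivity : (0:ℝ) ≤ 2*s*(1+s))]
  exact le_of_mul_le_mul_left main hs0
end

section
/- Assume V : ℝ^d → ℝ is twice continuously differentiable, V(x) = ‖x‖²₂/2 for all x with ‖x‖₂ > R, and min_x V(x) = 0. Then for every τ > 0 there exists R* > 0 such that min_{‖y‖₂ = R*} V(y) > τ and, for every σ ∈ (0,1], ∫_{{x : V(x) ≥ τ}} exp(-V(x)/σ) dx ≤ 2 · Vol(B_{R*}) · exp(-τ/σ), where Vol(B_{R*}) is the Lebesgue volume of the Euclidean ball of radius R* centered at the origin. -/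
open MeasureTheory Real Filter Set Topology

section aux

variable {d : ℕ}

local notation "E" => EuclideanSpace ℝ (Fin d)

lemma gauss_integrable : Integrable (fun x : EuclideanSpace ℝ (Fin d) => Real.exp (-(1/2) * ‖x‖ ^ 2)) := by
  have h := (GaussianFourier.integrable_cexp_neg_mul_sq_norm_add (V := E)
    (b := (1/2 : ℂ)) (by norm_num) 0 0).norm
  refine h.congr (Eventually.of_forall fun x => ?_)
  have h2 : (-(1/2 : ℂ) * (‖x‖ : ℂ) ^ 2 + 0 * (inner ℝ (0 : EuclideanSpace ℝ (Fin d)) x : ℝ))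
      = ((-(1/2) * ‖x‖ ^ 2 : ℝ) : ℂ) := by push_cast; ring
  simp only [Complex.norm_exp]
  congr 1
  rw [h2, Complex.ofReal_re]

end aux

/-- Tail bound under Assumption (A): if `V` is `C²`, equals `‖x‖²/2` outside the ball of
radius `R` and has minimum value `0`, then for every `τ > 0` there is `R* > 0` with
`V > τ` on the sphere of radius `R*` and, for all `σ ∈ (0,1]`,
`∫_{V ≥ τ} exp(-V/σ) ≤ 2 Vol(B_{R*}) exp(-τ/σ)`. -/
theorem stmt19 {d : ℕ} (R : ℝ) (V : EuclideanSpace ℝ (Fin d) → ℝ)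
    (hV : ContDiff ℝ 2 V)
    (hout : ∀ x : EuclideanSpace ℝ (Fin d), R < ‖x‖ → V x = ‖x‖ ^ 2 / 2)
    (hnonneg : ∀ x, 0 ≤ V x) (hmin : ∃ x, V x = 0)
    (τ : ℝ) (hτ : 0 < τ) :
    ∃ Rstar : ℝ, 0 < Rstar ∧
      (∀ y : EuclideanSpace ℝ (Fin d), ‖y‖ = Rstar → τ < V y) ∧
      ∀ σ ∈ Set.Ioc (0:ℝ) 1,
        (∫ x in {x : EuclideanSpace ℝ (Fin d) | τ ≤ V x}, Real.exp (-V x / σ)) ≤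
          2 * (volume (Metric.closedBall (0 : EuclideanSpace ℝ (Fin d)) Rstar)).toReal *
            Real.exp (-τ / σ) := by
  classical
  set g : EuclideanSpace ℝ (Fin d) → ℝ := fun x => Real.exp (-(1/2) * ‖x‖ ^ 2) with hg_def
  have hgint : Integrable g := gauss_integrable
  have hg0 : ∀ x, 0 ≤ g x := fun x => (Real.exp_pos _).le
  have hVc : Continuous V := hV.continuous
  -- c := volume of unit ball, positive and finite
  set c : ℝ := (volume (Metric.closedBall (0 : EuclideanSpace ℝ (Fin d)) 1)).toReal with hc_def
  have hball_fin : ∀ r : ℝ, volume (Metric.closedBall (0 : EuclideanSpace ℝ (Fin d)) r) < ⊤ :=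
    fun r => (isCompact_closedBall _ _).measure_lt_top
  have hc_pos : 0 < c := by
    refine ENNReal.toReal_pos (ne_of_gt ?_) (hball_fin 1).ne
    exact Metric.measure_closedBall_pos volume 0 one_pos
  set ε : ℝ := Real.exp (-τ) * c with hε_def
  have hε : 0 < ε := mul_pos (Real.exp_pos _) hc_pos
  -- tail of the gaussian tends to 0
  have hT : Tendsto (fun n : ℕ => ∫ x in (Metric.closedBall (0 : EuclideanSpace ℝ (Fin d)) n)ᶜ, g x)
      atTop (𝓝 0) := by
    have h1 := tendsto_setIntegral_of_monotone (μ := volume) (f := g)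
      (s := fun n : ℕ => Metric.closedBall (0 : EuclideanSpace ℝ (Fin d)) n)
      (fun _ => measurableSet_closedBall)
      (fun m n hmn => Metric.closedBall_subset_closedBall (by exact_mod_cast hmn))
      (by rw [Metric.iUnion_closedBall_nat]; exact hgint.integrableOn)
    rw [Metric.iUnion_closedBall_nat] at h1
    have h2 : ∀ n : ℕ, ∫ x in (Metric.closedBall (0 : EuclideanSpace ℝ (Fin d)) n)ᶜ, g x
        = (∫ x in (univ : Set (EuclideanSpace ℝ (Fin d))), g x) - ∫ x in Metric.closedBall (0 : EuclideanSpace ℝ (Fin d)) n, g x := by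
      intro n
      rw [setIntegral_compl measurableSet_closedBall hgint, setIntegral_univ]
    simp only [h2]
    have h4 := (tendsto_const_nhds (x := ∫ x in (univ : Set (EuclideanSpace ℝ (Fin d))), g x)
      (f := (atTop : Filter ℕ))).sub h1
    simpa using h4
  obtain ⟨n₀, hn₀⟩ := (hT.eventually_lt_const hε).exists
  -- choice of Rstar
  set Rstar : ℝ := max (max (R + 1) 1) (max (Real.sqrt (2 * τ) + 1) (n₀ : ℝ)) with hRs_def
  have h1R : (1 : ℝ) ≤ Rstar := le_trans (le_max_right _ _) (le_max_left _ _)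
  have hRpos : 0 < Rstar := lt_of_lt_of_le one_pos h1R
  have hRR : R < Rstar :=
    lt_of_lt_of_le (lt_add_one R) (le_trans (le_max_left _ _) (le_max_left _ _))
  have hsqrt : Real.sqrt (2 * τ) < Rstar :=
    lt_of_lt_of_le (lt_add_one _) (le_trans (le_max_left _ _) (le_max_right _ _))
  have hn0R : (n₀ : ℝ) ≤ Rstar := le_trans (le_max_right _ _) (le_max_right _ _)
  have hτR : τ < Rstar ^ 2 / 2 := by
    have h2 : 2 * τ < Rstar ^ 2 := by
      calc 2 * τ = Real.sqrt (2 * τ) ^ 2 := (Real.sq_sqrt (by positivity)).symm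
        _ < Rstar ^ 2 := by
            exact pow_lt_pow_left₀ hsqrt (Real.sqrt_nonneg _) (by norm_num)
    linarith
  -- tail at Rstar is small
  have htail : ∫ x in (Metric.closedBall (0 : EuclideanSpace ℝ (Fin d)) Rstar)ᶜ, g x < ε := by
    refine lt_of_le_of_lt ?_ hn₀
    refine setIntegral_mono_set hgint.integrableOn (Eventually.of_forall hg0) ?_
    exact HasSubset.Subset.eventuallyLE
      (compl_subset_compl.2 (Metric.closedBall_subset_closedBall hn0R))
  -- V equals gaussian exponent outside the ball of radius Rstar
  have hVout : ∀ x : EuclideanSpace ℝ (Fin d), x ∉ Metric.closedBall (0 : EuclideanSpace ℝ (Fin d)) Rstar → V x = ‖x‖ ^ 2 / 2 := by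
    intro x hx
    apply hout
    have : Rstar < dist x 0 := by simpa [Metric.mem_closedBall, not_le] using hx
    rw [dist_zero_right] at this
    linarith
  refine ⟨Rstar, hRpos, ?_, ?_⟩
  · intro y hy
    rw [hout y (by rw [hy]; exact hRR), hy]
    exact hτR
  intro σ hσ
  obtain ⟨hσ0, hσ1⟩ := hσ
  set A : Set (EuclideanSpace ℝ (Fin d)) := {x : EuclideanSpace ℝ (Fin d) | τ ≤ V x} with hA_def
  have hA : MeasurableSet A := (isClosed_le continuous_const hVc).measurableSet
  set B : Set (EuclideanSpace ℝ (Fin d)) := Metric.closedBall (0 : EuclideanSpace ℝ (Fin d)) Rstar with hB_def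
  have hB : MeasurableSet B := measurableSet_closedBall
  set f : EuclideanSpace ℝ (Fin d) → ℝ := fun x => Real.exp (-V x / σ) with hf_def
  have hfc : Continuous f := Real.continuous_exp.comp ((hVc.neg).div_const σ)
  have hf0 : ∀ x, 0 ≤ f x := fun x => (Real.exp_pos _).le
  -- key pointwise bound on A
  have hkey : ∀ x ∈ A, f x ≤ Real.exp (-τ / σ) * (Real.exp τ * Real.exp (-V x)) := by
    intro x hx
    have hx' : τ ≤ V x := hx
    rw [← Real.exp_add, ← Real.exp_add]
    apply Real.exp_le_exp.2
    have h1 : σ * (V x - τ) ≤ V x - τ := by nlinarith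
    have h2 : -V x / σ ≤ -τ / σ + (τ - V x) := by
      rw [div_add' _ _ _ hσ0.ne', div_le_div_iff₀ hσ0 hσ0]
      nlinarith
    linarith
  -- integrability of f on A
  have hfint : IntegrableOn f A := by
    have hbound : Integrable (fun x : EuclideanSpace ℝ (Fin d) => Real.exp (-τ / σ) * (Real.exp τ * Real.exp (-V x))) := by
      refine (Integrable.const_mul ?_ _)
      refine Integrable.const_mul ?_ _
      -- exp (-V) is integrable
      have hin : IntegrableOn (fun x : EuclideanSpace ℝ (Fin d) => Real.exp (-V x)) (Metric.closedBall 0 (max R 0)) :=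
        (Real.continuous_exp.comp hVc.neg).continuousOn.integrableOn_compact
          (isCompact_closedBall _ _)
      have hout2 : IntegrableOn (fun x : EuclideanSpace ℝ (Fin d) => Real.exp (-V x))
          (Metric.closedBall (0 : EuclideanSpace ℝ (Fin d)) (max R 0))ᶜ := by
        refine (hgint.integrableOn).congr_fun ?_ measurableSet_closedBall.compl
        intro x hx
        have hx' : max R 0 < ‖x‖ := by
          have : max R 0 < dist x 0 := by
            simpa [Metric.mem_closedBall, not_le] using hx
          rwa [dist_zero_right] at this
        simp only [hg_def]
        rw [hout x (lt_of_le_of_lt (le_max_left _ _) hx')]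
        congr 1
        ring
      have := hin.union hout2
      rwa [union_compl_self, integrableOn_univ] at this
    refine Integrable.mono' hbound.integrableOn (hfc.aestronglyMeasurable.restrict) ?_
    filter_upwards [ae_restrict_mem hA] with x hx
    rw [Real.norm_eq_abs, abs_of_nonneg (hf0 x)]
    exact hkey x hx
  -- split the integral
  have hsplit : (∫ x in A, f x) = (∫ x in A ∩ B, f x) + ∫ x in A \ B, f x :=
    (integral_inter_add_diff hB hfint).symm
  have hvolB : (0:ℝ) ≤ (volume B).toReal := ENNReal.toReal_nonneg
  -- bound on A ∩ B
  have hb1 : (∫ x in A ∩ B, f x) ≤ Real.exp (-τ / σ) * (volume B).toReal := by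
    have hABfin : volume (A ∩ B) < ⊤ :=
      lt_of_le_of_lt (measure_mono inter_subset_right) (hball_fin Rstar)
    have h := norm_setIntegral_le_of_norm_le_const (μ := volume) (s := A ∩ B) (f := f)
      (C := Real.exp (-τ / σ)) hABfin ?_
    · refine le_trans (le_trans (le_abs_self _) h) ?_
      refine mul_le_mul_of_nonneg_left ?_ (Real.exp_pos _).le
      exact ENNReal.toReal_mono (hball_fin Rstar).ne (measure_mono inter_subset_right)
    · intro x hx
      rw [Real.norm_eq_abs, abs_of_nonneg (hf0 x)]
      apply Real.exp_le_exp.2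
      have hτV : τ ≤ V x := hx.1
      exact (div_le_div_iff_of_pos_right hσ0).2 (by linarith)
  -- bound on A \ B
  have hb2 : (∫ x in A \ B, f x) ≤ Real.exp (-τ / σ) * (volume B).toReal := by
    have step1 : (∫ x in A \ B, f x)
        ≤ ∫ x in A \ B, Real.exp (-τ / σ) * Real.exp τ * g x := by
      refine setIntegral_mono_on (hfint.mono_set diff_subset)
        (((hgint.const_mul _).integrableOn).mono_set (subset_univ _))
        (hA.diff hB) ?_
      intro x hx
      have h1 := hkey x hx.1
      have h2 : Real.exp (-V x) = g x := by
        simp only [hg_def]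
        rw [hVout x hx.2]
        congr 1
        ring
      rw [h2] at h1
      linarith [h1]
    have step2 : (∫ x in A \ B, Real.exp (-τ / σ) * Real.exp τ * g x)
        = Real.exp (-τ / σ) * Real.exp τ * ∫ x in A \ B, g x := by
      rw [integral_const_mul]
    have step3 : (∫ x in A \ B, g x) ≤ ∫ x in Bᶜ, g x := by
      refine setIntegral_mono_set hgint.integrableOn (Eventually.of_forall hg0) ?_
      exact HasSubset.Subset.eventuallyLE (fun x hx => hx.2)
    have step4 : (∫ x in Bᶜ, g x) ≤ ε := le_of_lt htail
    have hcB : c ≤ (volume B).toReal :=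
      ENNReal.toReal_mono (hball_fin Rstar).ne
        (measure_mono (Metric.closedBall_subset_closedBall h1R))
    calc (∫ x in A \ B, f x) ≤ Real.exp (-τ / σ) * Real.exp τ * ∫ x in A \ B, g x := by
          rw [← step2]; exact step1
      _ ≤ Real.exp (-τ / σ) * Real.exp τ * ε := by
          refine mul_le_mul_of_nonneg_left (step3.trans step4) (by positivity)
      _ = Real.exp (-τ / σ) * c := by
          rw [hε_def, ← mul_assoc]
          rw [mul_assoc (Real.exp (-τ / σ))]
          rw [← Real.exp_add]
          simp
      _ ≤ Real.exp (-τ / σ) * (volume B).toReal :=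
          mul_le_mul_of_nonneg_left hcB (Real.exp_pos _).le
  calc (∫ x in A, f x) = (∫ x in A ∩ B, f x) + ∫ x in A \ B, f x := hsplit
    _ ≤ Real.exp (-τ / σ) * (volume B).toReal + Real.exp (-τ / σ) * (volume B).toReal :=
        add_le_add hb1 hb2
    _ = 2 * (volume B).toReal * Real.exp (-τ / σ) := by ring
end
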